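/- Let u : 𝔹ⁿ → (−1,1) be a pluriharmonic function on the unit ball of ℂⁿ. Then for every z ∈ 𝔹ⁿ, |∇u(z)| ≤ (4/π) (1 − u(z)²)/(1 − |z|²). -/

import Mathlib

/-!
Write `u = Re F` with `F` holomorphic. For a unit vector `v`, the complex line through `z` in
direction `v` meets the ball in a disc of radius `ρ ≤ 1`; parametrising it affinely by the unit
disc turns `‖dF(z) v‖` into a one-variable derivative. In one variable, `tan (π F / 4)` maps the
disc into itself, so Schwarz–Pick gives `|g'(w)| ≤ (4/π) cos (π Re g(w) / 2) / (1 - |w|²)`,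
using `|cos ζ|² - |sin ζ|² = cos (2 Re ζ)`. Rescaling back costs the factor `ρ ≤ 1`, and
`cos (π u / 2) ≤ 1 - u²` on `[-1, 1]` finishes.
-/

open Metric Set Complex ComplexConjugate
open scoped InnerProductSpace

theorem Real.cos_pi_mul_div_two_nonneg {u : ℝ} (hu : |u| ≤ 1) : 0 ≤ Real.cos (Real.pi * u / 2) :=
  Real.cos_nonneg_of_mem_Icc ⟨by nlinarith [neg_abs_le u, Real.pi_pos],
    by nlinarith [le_abs_self u, Real.pi_pos]⟩

theorem Real.cos_pi_mul_div_two_le_one_sub_sq {u : ℝ} (hu : |u| ≤ 1) :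
    Real.cos (Real.pi * u / 2) ≤ 1 - u ^ 2 := by
  -- Near `0` the Taylor bound `cos x ≤ 1 - x²/2 + 5x⁴/96` suffices; near `1` use
  -- `cos (π u / 2) = sin (π (1 - u) / 2) ≤ π (1 - u) / 2`, which is `≤ 1 - u²` once `u ≥ π/2 - 1`.
  wlog h0 : 0 ≤ u generalizing u
  · simpa [neg_div, mul_neg] using this (u := -u) (by rwa [abs_neg]) (by linarith)
  have hu1 : u ≤ 1 := (abs_le.1 hu).2
  have hpi3 := Real.pi_gt_three
  have hpi := Real.pi_lt_d2
  rcases le_or_gt (Real.pi * u / 2) 1 with hsmall | hlarge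
  · set x := Real.pi * u / 2 with hx
    have hx0 : 0 ≤ x := by positivity
    have hb := (abs_le.1 (Real.cos_bound (abs_le.2 ⟨by linarith, hsmall⟩))).2
    rw [abs_of_nonneg hx0] at hb
    have hux : u ^ 2 * Real.pi ^ 2 = 4 * x ^ 2 := by rw [hx]; ring
    have hx2 : x ^ 2 ≤ 1 := pow_le_one₀ hx0 hsmall
    have : u ^ 2 * Real.pi ^ 2 ≤ (x ^ 2 / 2 - x ^ 4 * (5 / 96)) * Real.pi ^ 2 := by
      nlinarith [mul_nonneg (mul_nonneg (sq_nonneg x) (sub_nonneg.2 hx2)) (sq_nonneg Real.pi),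
        mul_nonneg (sq_nonneg x) (by nlinarith : (0 : ℝ) ≤ Real.pi ^ 2 - 9)]
    nlinarith [le_of_mul_le_mul_right this (by positivity)]
  · have hs := Real.sin_le (x := Real.pi * (1 - u) / 2) (by nlinarith)
    rw [← Real.cos_pi_div_two_sub,
      show Real.pi / 2 - Real.pi * (1 - u) / 2 = Real.pi * u / 2 by ring] at hs
    have : Real.pi / 2 * Real.pi < (1 + u) * Real.pi := by
      nlinarith [mul_pos (sub_pos.2 hpi3) (sub_pos.2 hpi)]
    nlinarith [lt_of_mul_lt_mul_right this Real.pi_pos.le]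

namespace Complex

noncomputable def discMoebius (a z : ℂ) : ℂ := (z + a) / (1 + conj a * z)

theorem normSq_one_add_conj_mul_sub_normSq_add (a z : ℂ) :
    normSq (1 + conj a * z) - normSq (z + a) = (1 - normSq a) * (1 - normSq z) := by
  simp only [normSq_apply, add_re, add_im, mul_re, mul_im, one_re, one_im, conj_re, conj_im]
  ring

theorem one_add_conj_mul_ne_zero {a z : ℂ} (ha : ‖a‖ < 1) (hz : ‖z‖ < 1) :
    1 + conj a * z ≠ 0 := by
  intro h
  have : ‖conj a * z‖ = 1 := by rw [eq_neg_of_add_eq_zero_right h, norm_neg, norm_one]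
  rw [norm_mul, norm_conj] at this
  nlinarith [norm_nonneg a, norm_nonneg z]

theorem norm_discMoebius_lt_one {a z : ℂ} (ha : ‖a‖ < 1) (hz : ‖z‖ < 1) :
    ‖discMoebius a z‖ < 1 := by
  have hden := one_add_conj_mul_ne_zero ha hz
  rw [discMoebius, norm_div, div_lt_one (norm_pos_iff.2 hden), ← sq_lt_sq₀ (norm_nonneg _)
    (norm_nonneg _), ← normSq_eq_norm_sq, ← normSq_eq_norm_sq, ← sub_pos,
    normSq_one_add_conj_mul_sub_normSq_add, normSq_eq_norm_sq, normSq_eq_norm_sq]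
  have ha2 : ‖a‖ ^ 2 < 1 := by nlinarith [norm_nonneg a]
  have hz2 : ‖z‖ ^ 2 < 1 := by nlinarith [norm_nonneg z]
  exact mul_pos (by linarith) (by linarith)

theorem mapsTo_discMoebius {a : ℂ} (ha : ‖a‖ < 1) :
    MapsTo (discMoebius a) (ball 0 1) (ball 0 1) := fun _ hz ↦ by
  rw [mem_ball_zero_iff] at hz ⊢
  exact norm_discMoebius_lt_one ha hz

theorem hasDerivAt_discMoebius {a z : ℂ} (h : 1 + conj a * z ≠ 0) :
    HasDerivAt (discMoebius a) ((1 - a * conj a) / (1 + conj a * z) ^ 2) z := by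
  refine (((hasDerivAt_id' z).add_const a).div
    (((hasDerivAt_id' z).const_mul (conj a)).const_add 1) h).congr_deriv ?_
  ring

theorem differentiableOn_discMoebius {a : ℂ} (ha : ‖a‖ < 1) :
    DifferentiableOn ℂ (discMoebius a) (ball 0 1) := fun _ hz ↦
  (hasDerivAt_discMoebius (one_add_conj_mul_ne_zero ha (mem_ball_zero_iff.1 hz))
    ).differentiableAt.differentiableWithinAt

@[simp] theorem discMoebius_zero (a : ℂ) : discMoebius a 0 = a := by simp [discMoebius]

@[simp] theorem discMoebius_neg_self (a : ℂ) : discMoebius (-a) a = 0 := by simp [discMoebius]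

/-- **Schwarz–Pick lemma**, infinitesimal form. -/
theorem norm_deriv_le_of_mapsTo_unitBall {f : ℂ → ℂ} (hf : DifferentiableOn ℂ f (ball 0 1))
    (hmaps : MapsTo f (ball 0 1) (ball 0 1)) {w : ℂ} (hw : ‖w‖ < 1) :
    ‖deriv f w‖ ≤ (1 - ‖f w‖ ^ 2) / (1 - ‖w‖ ^ 2) := by
  set b := f w
  have hb : ‖b‖ < 1 := mem_ball_zero_iff.1 (hmaps (mem_ball_zero_iff.2 hw))
  have hnb : ‖-b‖ < 1 := by rwa [norm_neg]
  set k := discMoebius (-b) ∘ f ∘ discMoebius w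
  have hk : DifferentiableOn ℂ k (ball 0 1) :=
    (differentiableOn_discMoebius hnb).comp (hf.comp (differentiableOn_discMoebius hw)
      (mapsTo_discMoebius hw)) (hmaps.comp (mapsTo_discMoebius hw))
  have hk0 : k 0 = 0 := by simp [k, b]
  have hkmaps : MapsTo k (ball 0 1) (closedBall (k 0) 1) := by
    rw [hk0]
    exact ((mapsTo_discMoebius hnb).comp (hmaps.comp (mapsTo_discMoebius hw))).mono_right
      ball_subset_closedBall
  have hschwarz := norm_deriv_le_one_of_mapsTo_ball hk hkmaps one_pos
  have hfw : HasDerivAt f (deriv f w) (discMoebius w 0) := by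
    rw [discMoebius_zero]
    exact (hf.differentiableAt (isOpen_ball.mem_nhds (mem_ball_zero_iff.2 hw))).hasDerivAt
  have hψ : HasDerivAt (discMoebius (-b))
      ((1 - -b * conj (-b)) / (1 + conj (-b) * b) ^ 2) (f (discMoebius w 0)) := by
    rw [discMoebius_zero]
    exact hasDerivAt_discMoebius (one_add_conj_mul_ne_zero hnb hb)
  rw [(hψ.comp 0 (hfw.comp 0 (hasDerivAt_discMoebius (by simp)))).deriv] at hschwarz
  have hb2 : ‖b‖ ^ 2 < 1 := by nlinarith [norm_nonneg b]
  have hw2 : ‖w‖ ^ 2 < 1 := by nlinarith [norm_nonneg w]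
  have h1 : 1 + conj (-b) * b = ((1 - ‖b‖ ^ 2 : ℝ) : ℂ) := by
    rw [map_neg, neg_mul, mul_comm, mul_conj, normSq_eq_norm_sq]; push_cast; ring
  have h2 : 1 - -b * conj (-b) = ((1 - ‖b‖ ^ 2 : ℝ) : ℂ) := by
    rw [map_neg, neg_mul_neg, mul_conj, normSq_eq_norm_sq]; push_cast; ring
  have h3 : (1 - w * conj w) / (1 + conj w * 0) ^ 2 = ((1 - ‖w‖ ^ 2 : ℝ) : ℂ) := by
    rw [mul_conj, normSq_eq_norm_sq]; push_cast; ring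
  rw [h1, h2, h3, norm_mul, norm_mul, norm_div, norm_pow, norm_real, norm_real,
    Real.norm_of_nonneg (by linarith), Real.norm_of_nonneg (by linarith)] at hschwarz
  rw [show (1 - ‖b‖ ^ 2) / (1 - ‖b‖ ^ 2) ^ 2 = (1 - ‖b‖ ^ 2)⁻¹ by field_simp,
    inv_mul_le_iff₀ (by linarith), mul_one] at hschwarz
  rwa [le_div_iff₀ (by linarith)]

theorem normSq_cos_sub_normSq_sin (ζ : ℂ) :
    normSq (cos ζ) - normSq (sin ζ) = Real.cos (2 * ζ.re) := by
  apply ofReal_injective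
  push_cast
  rw [← mul_conj, ← mul_conj, ← cos_conj, ← sin_conj, ← cos_add, add_conj]
  push_cast; ring_nf

theorem one_sub_sq_norm_tan {ζ : ℂ} (h : cos ζ ≠ 0) :
    1 - ‖tan ζ‖ ^ 2 = Real.cos (2 * ζ.re) / ‖cos ζ‖ ^ 2 := by
  have hc : ‖cos ζ‖ ^ 2 ≠ 0 := by simpa using h
  rw [tan_eq_sin_div_cos, norm_div, div_pow, ← normSq_cos_sub_normSq_sin, normSq_eq_norm_sq,
    normSq_eq_norm_sq]
  field_simp

theorem cos_two_mul_re_pos {ζ : ℂ} (h : |ζ.re| < Real.pi / 4) : 0 < Real.cos (2 * ζ.re) :=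
  Real.cos_pos_of_mem_Ioo ⟨by linarith [neg_abs_le ζ.re], by linarith [le_abs_self ζ.re]⟩

theorem cos_ne_zero_of_abs_re_lt {ζ : ℂ} (h : |ζ.re| < Real.pi / 4) : cos ζ ≠ 0 := by
  intro h0
  have := normSq_cos_sub_normSq_sin ζ
  rw [h0, map_zero] at this
  linarith [normSq_nonneg (sin ζ), cos_two_mul_re_pos h]

theorem norm_tan_lt_one {ζ : ℂ} (h : |ζ.re| < Real.pi / 4) : ‖tan ζ‖ < 1 := by
  have : 0 < 1 - ‖tan ζ‖ ^ 2 := by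
    rw [one_sub_sq_norm_tan (cos_ne_zero_of_abs_re_lt h)]
    exact div_pos (cos_two_mul_re_pos h) (pow_pos (norm_pos_iff.2 (cos_ne_zero_of_abs_re_lt h)) 2)
  nlinarith [norm_nonneg (tan ζ)]

theorem norm_deriv_le_of_abs_re_lt_one {g : ℂ → ℂ} (hg : DifferentiableOn ℂ g (ball 0 1))
    (hre : ∀ t ∈ ball 0 1, |(g t).re| < 1) {w : ℂ} (hw : ‖w‖ < 1) :
    ‖deriv g w‖ ≤ 4 / Real.pi * Real.cos (Real.pi * (g w).re / 2) / (1 - ‖w‖ ^ 2) := by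
  have hpi := Real.pi_pos
  set c : ℂ := ((Real.pi / 4 : ℝ) : ℂ)
  have hre_c : ∀ t, (c * g t).re = Real.pi / 4 * (g t).re := fun t ↦ re_ofReal_mul _ _
  have hstrip : ∀ t ∈ ball (0 : ℂ) 1, |(c * g t).re| < Real.pi / 4 := fun t ht ↦ by
    rw [hre_c, abs_mul, abs_of_pos (by positivity)]
    nlinarith [hre t ht]
  have hcos : ∀ t ∈ ball (0 : ℂ) 1, cos (c * g t) ≠ 0 := fun t ht ↦
    cos_ne_zero_of_abs_re_lt (hstrip t ht)
  have htan : ∀ t ∈ ball (0 : ℂ) 1,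
      HasDerivAt (fun t ↦ tan (c * g t)) (1 / cos (c * g t) ^ 2 * (c * deriv g t)) t :=
    fun t ht ↦ (hasDerivAt_tan (hcos t ht)).comp (h₂ := tan) t
      ((hg.differentiableAt (isOpen_ball.mem_nhds ht)).hasDerivAt.const_mul c)
  have hw' : w ∈ ball (0 : ℂ) 1 := mem_ball_zero_iff.2 hw
  have hpick := norm_deriv_le_of_mapsTo_unitBall
    (fun t ht ↦ (htan t ht).differentiableAt.differentiableWithinAt)
    (fun t ht ↦ mem_ball_zero_iff.2 (norm_tan_lt_one (hstrip t ht))) hw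
  have hC : 0 < ‖cos (c * g w)‖ ^ 2 := pow_pos (norm_pos_iff.2 (hcos w hw')) 2
  rw [(htan w hw').deriv, one_sub_sq_norm_tan (hcos w hw'), hre_c, norm_mul, norm_div, norm_one,
    norm_pow, norm_mul, norm_real, Real.norm_of_nonneg (by positivity),
    show 2 * (Real.pi / 4 * (g w).re) = Real.pi * (g w).re / 2 by ring] at hpick
  have hw2 : 0 < 1 - ‖w‖ ^ 2 := by nlinarith [norm_nonneg w]
  rw [div_div, one_div_mul_eq_div, div_le_div_iff₀ hC (by positivity)] at hpick
  rw [le_div_iff₀ hw2]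
  field_simp
  nlinarith

end Complex

section

variable {E : Type*} [NormedAddCommGroup E] [InnerProductSpace ℂ E] {z v : E}

theorem norm_add_smul_sq_of_norm_eq_one (hv : ‖v‖ = 1) (z : E) (t : ℂ) :
    ‖z + t • v‖ ^ 2 = ‖z‖ ^ 2 - ‖⟪z, v⟫_ℂ‖ ^ 2 + ‖t + conj ⟪z, v⟫_ℂ‖ ^ 2 := by
  rw [norm_add_sq (𝕜 := ℂ), inner_smul_right, norm_smul, hv, mul_one, ← normSq_eq_norm_sq,
    ← normSq_eq_norm_sq, ← normSq_eq_norm_sq, normSq_add, normSq_conj, conj_conj,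
    RCLike.re_to_complex]
  ring

noncomputable def ballSliceRadius (z v : E) : ℝ := √(1 - ‖z‖ ^ 2 + ‖⟪z, v⟫_ℂ‖ ^ 2)

/-- For a unit vector `v`, `ballSlice z v` maps the unit disc onto the slice
`{z + t • v} ∩ ball 0 1`, a disc of radius `ballSliceRadius z v` centred at `-conj ⟪z, v⟫`. -/
noncomputable def ballSlice (z v : E) (τ : ℂ) : E :=
  z + ((ballSliceRadius z v : ℂ) * τ - conj ⟪z, v⟫_ℂ) • v

theorem sq_ballSliceRadius (hz : ‖z‖ < 1) :
    ballSliceRadius z v ^ 2 = 1 - ‖z‖ ^ 2 + ‖⟪z, v⟫_ℂ‖ ^ 2 :=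
  Real.sq_sqrt (by nlinarith [norm_nonneg z, sq_nonneg ‖⟪z, v⟫_ℂ‖])

theorem ballSliceRadius_pos (hz : ‖z‖ < 1) : 0 < ballSliceRadius z v :=
  Real.sqrt_pos.2 (by nlinarith [norm_nonneg z, sq_nonneg ‖⟪z, v⟫_ℂ‖])

theorem ballSliceRadius_le_one (hv : ‖v‖ = 1) : ballSliceRadius z v ≤ 1 := by
  have h : ‖⟪z, v⟫_ℂ‖ ≤ ‖z‖ := by simpa [hv] using norm_inner_le_norm (𝕜 := ℂ) z v
  exact Real.sqrt_le_one.2 (by nlinarith [norm_nonneg ⟪z, v⟫_ℂ])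

theorem norm_ballSlice_sq (hz : ‖z‖ < 1) (hv : ‖v‖ = 1) (τ : ℂ) :
    ‖ballSlice z v τ‖ ^ 2 = 1 - ballSliceRadius z v ^ 2 * (1 - ‖τ‖ ^ 2) := by
  rw [ballSlice, norm_add_smul_sq_of_norm_eq_one hv, sub_add_cancel, norm_mul, norm_real,
    Real.norm_of_nonneg (ballSliceRadius_pos hz).le]
  linear_combination sq_ballSliceRadius (v := v) hz

theorem mapsTo_ballSlice (hz : ‖z‖ < 1) (hv : ‖v‖ = 1) :
    MapsTo (ballSlice z v) (ball 0 1) (ball 0 1) := fun τ hτ ↦ by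
  rw [mem_ball_zero_iff] at hτ ⊢
  have h := norm_ballSlice_sq hz hv τ
  have hρ := ballSliceRadius_pos (v := v) hz
  have hτ2 : 0 < 1 - ‖τ‖ ^ 2 := by nlinarith [norm_nonneg τ]
  rw [← pow_lt_one_iff_of_nonneg (norm_nonneg _) two_ne_zero, h]
  nlinarith [mul_pos (pow_pos hρ 2) hτ2]

theorem ballSlice_conj_inner_div (hz : ‖z‖ < 1) :
    ballSlice z v (conj ⟪z, v⟫_ℂ / ballSliceRadius z v) = z := by
  have hρ : (ballSliceRadius z v : ℂ) ≠ 0 := ofReal_ne_zero.2 (ballSliceRadius_pos hz).ne'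
  simp [ballSlice, mul_div_cancel₀ _ hρ]

theorem hasDerivAt_ballSlice (z v : E) (τ : ℂ) :
    HasDerivAt (ballSlice z v) ((ballSliceRadius z v : ℂ) • v) τ := by
  have h := ((((hasDerivAt_id' τ).const_mul (ballSliceRadius z v : ℂ)).sub_const
    (conj ⟪z, v⟫_ℂ)).smul_const v).const_add z
  rw [mul_one] at h
  exact h

theorem norm_fderiv_apply_le_of_abs_re_lt_one {F : E → ℂ} (hF : DifferentiableOn ℂ F (ball 0 1))
    (hre : ∀ x ∈ ball (0 : E) 1, |(F x).re| < 1) (hz : ‖z‖ < 1) (hv : ‖v‖ = 1) :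
    ‖fderiv ℂ F z v‖ ≤ 4 / Real.pi * Real.cos (Real.pi * (F z).re / 2) / (1 - ‖z‖ ^ 2) := by
  set ρ := ballSliceRadius z v
  set τ₀ := conj ⟪z, v⟫_ℂ / ρ
  set K := 4 / Real.pi * Real.cos (Real.pi * (F z).re / 2)
  have hρ : 0 < ρ := ballSliceRadius_pos hz
  have hK : 0 ≤ K := mul_nonneg (by positivity [Real.pi_pos])
    (Real.cos_pi_mul_div_two_nonneg (hre z (mem_ball_zero_iff.2 hz)).le)
  have hcenter : ballSlice z v τ₀ = z := ballSlice_conj_inner_div hz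
  have hzτ₀ := norm_ballSlice_sq hz hv τ₀
  rw [hcenter] at hzτ₀
  have hz2 : 0 < 1 - ‖z‖ ^ 2 := by nlinarith [norm_nonneg z]
  have hτ₀ : ‖τ₀‖ < 1 := by
    have h : 0 < 1 - ‖τ₀‖ ^ 2 :=
      (pos_iff_pos_of_mul_pos (a := ρ ^ 2) (by linarith)).1 (pow_pos hρ 2)
    nlinarith [norm_nonneg τ₀]
  have hmaps := mapsTo_ballSlice hz hv
  have hg : DifferentiableOn ℂ (F ∘ ballSlice z v) (ball 0 1) :=
    hF.comp (fun τ _ ↦ (hasDerivAt_ballSlice z v τ).differentiableAt.differentiableWithinAt) hmaps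
  have hFz : HasFDerivAt F (fderiv ℂ F z) (ballSlice z v τ₀) := by
    rw [hcenter]
    exact (hF.differentiableAt (isOpen_ball.mem_nhds (mem_ball_zero_iff.2 hz))).hasFDerivAt
  have h := norm_deriv_le_of_abs_re_lt_one hg (fun τ hτ ↦ hre _ (hmaps hτ)) hτ₀
  rw [(hFz.comp_hasDerivAt τ₀ (hasDerivAt_ballSlice z v τ₀)).deriv, Function.comp_apply, hcenter,
    map_smul, norm_smul, norm_real, Real.norm_of_nonneg hρ.le,
    show 1 - ‖τ₀‖ ^ 2 = (1 - ‖z‖ ^ 2) / ρ ^ 2 by field_simp; linarith, div_div_eq_mul_div] at h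
  calc ‖fderiv ℂ F z v‖ ≤ K * ρ / (1 - ‖z‖ ^ 2) :=
        le_of_mul_le_mul_left (h.trans_eq (by ring)) hρ
    _ ≤ K / (1 - ‖z‖ ^ 2) := by
        gcongr
        exact mul_le_of_le_one_right hK (ballSliceRadius_le_one hv)

theorem norm_fderiv_le_of_abs_re_lt_one {F : E → ℂ} (hF : DifferentiableOn ℂ F (ball 0 1))
    (hre : ∀ x ∈ ball (0 : E) 1, |(F x).re| < 1) (hz : ‖z‖ < 1) :
    ‖fderiv ℂ F z‖ ≤ 4 / Real.pi * Real.cos (Real.pi * (F z).re / 2) / (1 - ‖z‖ ^ 2) :=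
  ContinuousLinearMap.opNorm_le_of_unit_norm
    (div_nonneg (mul_nonneg (by positivity [Real.pi_pos])
      (Real.cos_pi_mul_div_two_nonneg (hre z (mem_ball_zero_iff.2 hz)).le))
      (by nlinarith [norm_nonneg z]))
    fun _ hv ↦ norm_fderiv_apply_le_of_abs_re_lt_one hF hre hz hv

end

theorem schwarz_pick_pluriharmonic_general (n : ℕ)
    (u : EuclideanSpace ℂ (Fin n) → ℝ)
    (hu : ∃ F : EuclideanSpace ℂ (Fin n) → ℂ,
      DifferentiableOn ℂ F (ball (0 : EuclideanSpace ℂ (Fin n)) 1) ∧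
      ∀ z ∈ ball (0 : EuclideanSpace ℂ (Fin n)) 1, u z = (F z).re)
    (hrange : ∀ z ∈ ball (0 : EuclideanSpace ℂ (Fin n)) 1, u z ∈ Ioo (-1 : ℝ) 1) :
    ∀ z ∈ ball (0 : EuclideanSpace ℂ (Fin n)) 1,
      ‖fderiv ℝ u z‖ ≤ (4 / Real.pi) * (1 - (u z) ^ 2) / (1 - ‖z‖ ^ 2) := by
  intro z hz
  obtain ⟨F, hF, hFu⟩ := hu
  have hre : ∀ x ∈ ball (0 : EuclideanSpace ℂ (Fin n)) 1, |(F x).re| < 1 := fun x hx ↦ by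
    rw [← hFu x hx]
    exact abs_lt.2 (hrange x hx)
  have hFz := (hF.differentiableAt (isOpen_ball.mem_nhds hz)).hasFDerivAt
  have hderiv : fderiv ℝ u z = reCLM.comp ((fderiv ℂ F z).restrictScalars ℝ) :=
    ((reCLM.hasFDerivAt.comp z (hFz.restrictScalars ℝ)).congr_of_eventuallyEq
      (Filter.eventually_of_mem (isOpen_ball.mem_nhds hz) hFu)).fderiv
  have hz1 : ‖z‖ < 1 := mem_ball_zero_iff.1 hz
  calc ‖fderiv ℝ u z‖ ≤ ‖fderiv ℂ F z‖ := by
        rw [hderiv]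
        refine (ContinuousLinearMap.opNorm_comp_le _ _).trans ?_
        rw [reCLM_norm, one_mul, ContinuousLinearMap.norm_restrictScalars]
    _ ≤ 4 / Real.pi * Real.cos (Real.pi * (F z).re / 2) / (1 - ‖z‖ ^ 2) :=
        norm_fderiv_le_of_abs_re_lt_one hF hre hz1
    _ ≤ 4 / Real.pi * (1 - u z ^ 2) / (1 - ‖z‖ ^ 2) := by
        have hz2 : 0 < 1 - ‖z‖ ^ 2 := by nlinarith [norm_nonneg z]
        rw [hFu z hz]
        gcongr
        exact Real.cos_pi_mul_div_two_le_one_sub_sq (hre z hz).le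

theorem schwarz_pick_pluriharmonic (n : ℕ) (hn : 1 ≤ n)
    (u : EuclideanSpace ℂ (Fin n) → ℝ)
    (hu : ∃ F : EuclideanSpace ℂ (Fin n) → ℂ,
      DifferentiableOn ℂ F (ball (0 : EuclideanSpace ℂ (Fin n)) 1) ∧
      ∀ z ∈ ball (0 : EuclideanSpace ℂ (Fin n)) 1, u z = (F z).re)
    (hrange : ∀ z ∈ ball (0 : EuclideanSpace ℂ (Fin n)) 1, u z ∈ Ioo (-1 : ℝ) 1) :
    ∀ z ∈ ball (0 : EuclideanSpace ℂ (Fin n)) 1,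
      ‖fderiv ℝ u z‖ ≤ (4 / Real.pi) * (1 - (u z) ^ 2) / (1 - ‖z‖ ^ 2) :=
  schwarz_pick_pluriharmonic_general n u hu hrange
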